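/- Let v and w be words over {0,1,•} of lengths M−1 and N−1 respectively, and let ℓ be the number of 1's in v. Then Δ ↦ dec(Δ) is a bijection from the set of M,N-invariant sets fitting (1v, 0w) onto the set of M,N-invariant sets fitting (v1, w•); moreover, for Δ fitting (1v, 0w), area(dec(Δ)) = area(Δ) and pdinv(dec(Δ)) = pdinv(Δ) − ℓ. -/
import Mathlib

/-- The alphabet {0, 1, •}. -/
inductive Symb where
  | zero : Symb
  | one : Symb
  | bullet : Symb
deriving DecidableEq

/-- An `M,N`-invariant set: a subset of ℕ with finite complement,
closed under adding `M` and adding `N`. -/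
def Invariant (M N : ℕ) (Δ : Set ℕ) : Prop :=
  {n : ℕ | n ∉ Δ}.Finite ∧ ∀ i ∈ Δ, i + M ∈ Δ ∧ i + N ∈ Δ

/-- `c` is a north step of `Δ`: `c ∉ Δ` and `c + N ∈ Δ`. -/
def NorthStep (N : ℕ) (Δ : Set ℕ) (c : ℕ) : Prop := c ∉ Δ ∧ c + N ∈ Δ

/-- `c` is an east step of `Δ`: `c ∉ Δ` and `c + M ∈ Δ`. -/
def EastStep (M : ℕ) (Δ : Set ℕ) (c : ℕ) : Prop := c ∉ Δ ∧ c + M ∈ Δ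

/-- `area Δ` is the number of `c ≥ M + N` with `c ∉ Δ`. -/
noncomputable def area (M N : ℕ) (Δ : Set ℕ) : ℕ := {c : ℕ | M + N ≤ c ∧ c ∉ Δ}.ncard

/-- `pdinv Δ` is the number of pairs `(c, d)` with `c < d`, `M ≤ d < c + M`,
`c` a north step of `Δ`, and `d ∉ Δ`. -/
noncomputable def pdinv (M N : ℕ) (Δ : Set ℕ) : ℕ :=
  {p : ℕ × ℕ | p.1 < p.2 ∧ M ≤ p.2 ∧ p.2 < p.1 + M ∧ NorthStep N Δ p.1 ∧ p.2 ∉ Δ}.ncard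

/-- `Δ` fits the pair of words `(v, w)`, where `v` has length `M` and `w` has length `N`. -/
def Fits (M N : ℕ) (Δ : Set ℕ) (v w : List Symb) : Prop :=
  v.length = M ∧ w.length = N ∧
  (∀ (i : ℕ) (hi : i < v.length),
    (v.get ⟨i, hi⟩ = Symb.bullet ↔ i ∈ Δ) ∧
    (v.get ⟨i, hi⟩ = Symb.one ↔ NorthStep N Δ i) ∧
    (v.get ⟨i, hi⟩ = Symb.zero ↔ (i ∉ Δ ∧ i + N ∉ Δ))) ∧
  (∀ (i : ℕ) (hi : i < w.length),
    (w.get ⟨i, hi⟩ = Symb.bullet ↔ i ∈ Δ) ∧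
    (w.get ⟨i, hi⟩ = Symb.one ↔ EastStep M Δ i) ∧
    (w.get ⟨i, hi⟩ = Symb.zero ↔ (i ∉ Δ ∧ i + M ∉ Δ)))

/-- Decrement: `dec Δ = {i : ℕ | i + 1 ∈ Δ}`. -/
def dec (Δ : Set ℕ) : Set ℕ := {i : ℕ | i + 1 ∈ Δ}

/- ============ auxiliary lemmas ============ -/

lemma count_filter_range (v : List Symb) (a : Symb) :
    ((Finset.range v.length).filter (fun i => v.getD i Symb.zero = a)).card = v.count a := by
  induction v using List.reverseRecOn with
  | nil => simp
  | append_singleton t x ih =>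
    rw [List.length_append, List.length_singleton, Finset.range_add_one]
    rw [Finset.filter_insert]
    have hx : (t ++ [x]).getD t.length Symb.zero = x := by
      simp [List.getD_eq_getElem]
    have hsame : ∀ i ∈ Finset.range t.length,
        ((t ++ [x]).getD i Symb.zero = a) = (t.getD i Symb.zero = a) := by
      intro i hi
      rw [Finset.mem_range] at hi
      have : (t ++ [x]).getD i Symb.zero = t.getD i Symb.zero := by
        rw [List.getD_eq_getElem _ _ (by simp; omega), List.getD_eq_getElem _ _ hi]
        simp [List.getElem_append_left hi]
      rw [this]
    rw [Finset.filter_congr (fun i hi => iff_of_eq (hsame i hi))]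
    by_cases h : x = a
    · rw [if_pos (by rw [hx, h]), Finset.card_insert_of_notMem (by simp), ih]
      simp [h, List.count_append]
    · rw [if_neg (by rw [hx]; exact h), ih]
      simp [List.count_append, List.count_cons, h]

lemma mem_dec {Δ : Set ℕ} {i : ℕ} : i ∈ dec Δ ↔ i + 1 ∈ Δ := Iff.rfl

lemma invariant_dec {M N : ℕ} {Δ : Set ℕ} (hInv : Invariant M N Δ) :
    Invariant M N (dec Δ) := by
  constructor
  · have : {n : ℕ | n ∉ dec Δ} = (fun n => n + 1) ⁻¹' {n : ℕ | n ∉ Δ} := rfl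
    rw [this]
    exact hInv.1.preimage (Set.injOn_of_injective (add_left_injective 1))
  · intro i hi
    have h1 := (hInv.2 (i + 1) hi).1
    have h2 := (hInv.2 (i + 1) hi).2
    constructor
    · show i + M + 1 ∈ Δ; rwa [show i + M + 1 = i + 1 + M by omega]
    · show i + N + 1 ∈ Δ; rwa [show i + N + 1 = i + 1 + N by omega]

lemma fits_facts {M N : ℕ} {Δ : Set ℕ} {v w : List Symb}
    (hInv : Invariant M N Δ)
    (hFits : Fits M N Δ (Symb.one :: v) (Symb.zero :: w)) :
    0 ∉ Δ ∧ N ∈ Δ ∧ M ∉ Δ ∧ M + N ∈ Δ := by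
  have h1 := hFits.2.2.1 0 (by simp)
  have hNS : NorthStep N Δ 0 := (h1.2.1).mp rfl
  have h0 : 0 ∉ Δ := hNS.1
  have hN : N ∈ Δ := by have := hNS.2; rwa [zero_add] at this
  have h2 := hFits.2.2.2 0 (by simp)
  have hMn : M ∉ Δ := by
    have := ((h2.2.2).mp rfl).2; rwa [zero_add] at this
  have hMN : M + N ∈ Δ := by
    have := (hInv.2 N hN).1; rwa [add_comm] at this
  exact ⟨h0, hN, hMn, hMN⟩

lemma fits_dec_iff (M N : ℕ) (Δ : Set ℕ) (v w : List Symb)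
    (hv : v.length + 1 = M) (hw : w.length + 1 = N)
    (hInv : Invariant M N Δ) (h0 : 0 ∉ Δ) :
    Fits M N Δ (Symb.one :: v) (Symb.zero :: w) ↔
      Fits M N (dec Δ) (v ++ [Symb.one]) (w ++ [Symb.bullet]) := by
  constructor
  · intro hFits
    obtain ⟨-, hN, hMn, hMN⟩ := fits_facts hInv hFits
    obtain ⟨-, -, hv3, hw3⟩ := hFits
    refine ⟨by simpa using hv, by simpa using hw, ?_, ?_⟩
    · intro i hi
      have hi' : i < v.length + 1 := by simpa using hi
      rcases Nat.lt_or_ge i v.length with h | h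
      · have e : (v ++ [Symb.one]).get ⟨i, hi⟩ = v.get ⟨i, h⟩ := by
          simp [List.getElem_append_left h]
        have h2 := hv3 (i + 1) (by simpa using Nat.succ_lt_succ h)
        simp only [List.get_eq_getElem, List.getElem_cons_succ] at h2
        rw [e]
        have harr : i + N + 1 = i + 1 + N := by omega
        simpa [NorthStep, dec, Set.mem_setOf_eq, harr, List.get_eq_getElem] using h2
      · have hieq : i = v.length := by omega
        subst hieq
        have e : (v ++ [Symb.one]).get ⟨v.length, hi⟩ = Symb.one := by simp
        rw [e]
        have hmem : v.length ∉ dec Δ := by show v.length + 1 ∉ Δ; rwa [hv]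
        have hNmem : v.length + N ∈ dec Δ := by
          show v.length + N + 1 ∈ Δ; rwa [show v.length + N + 1 = M + N by omega]
        refine ⟨⟨fun h' => (by cases h'), fun h' => absurd h' hmem⟩,
          ⟨fun _ => ⟨hmem, hNmem⟩, fun _ => rfl⟩,
          ⟨fun h' => (by cases h'), fun h' => absurd hNmem h'.2⟩⟩
    · intro i hi
      have hi' : i < w.length + 1 := by simpa using hi
      rcases Nat.lt_or_ge i w.length with h | h
      · have e : (w ++ [Symb.bullet]).get ⟨i, hi⟩ = w.get ⟨i, h⟩ := by
          simp [List.getElem_append_left h]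
        have h2 := hw3 (i + 1) (by simpa using Nat.succ_lt_succ h)
        simp only [List.get_eq_getElem, List.getElem_cons_succ] at h2
        rw [e]
        have harr : i + M + 1 = i + 1 + M := by omega
        simpa [EastStep, dec, Set.mem_setOf_eq, harr, List.get_eq_getElem] using h2
      · have hieq : i = w.length := by omega
        subst hieq
        have e : (w ++ [Symb.bullet]).get ⟨w.length, hi⟩ = Symb.bullet := by simp
        rw [e]
        have hmem : w.length ∈ dec Δ := by show w.length + 1 ∈ Δ; rwa [hw]
        refine ⟨⟨fun _ => hmem, fun _ => rfl⟩,
          ⟨fun h' => (by cases h'), fun h' => absurd hmem h'.1⟩,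
          ⟨fun h' => (by cases h'), fun h' => absurd hmem h'.1⟩⟩
  · intro hFits
    obtain ⟨-, -, hv3, hw3⟩ := hFits
    have hlast := hv3 v.length (by simp)
    have hNSl : NorthStep N (dec Δ) v.length := (hlast.2.1).mp (by simp)
    have hMn : M ∉ Δ := by
      have := hNSl.1; rw [mem_dec, hv] at this; exact this
    have hMN : M + N ∈ Δ := by
      have := hNSl.2; rw [mem_dec] at this
      rwa [show v.length + N + 1 = M + N by omega] at this
    have hwlast := hw3 w.length (by simp)
    have hN : N ∈ Δ := by
      have := (hwlast.1).mp (by simp)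
      rw [mem_dec, hw] at this; exact this
    refine ⟨by simpa using hv, by simpa using hw, ?_, ?_⟩
    · intro i hi
      match i with
      | 0 =>
        have hzN : (0:ℕ) + N ∈ Δ := by rwa [zero_add]
        refine ⟨⟨fun h' => (by cases h'), fun h' => absurd h' h0⟩,
          ⟨fun _ => ⟨h0, hzN⟩, fun _ => rfl⟩,
          ⟨fun h' => (by cases h'), fun h' => absurd hzN h'.2⟩⟩
      | (j + 1) =>
        have hj : j < v.length := by simpa using hi
        have h2 := hv3 j (by simp; omega)
        have e : (v ++ [Symb.one]).get ⟨j, by simp; omega⟩ = v.get ⟨j, hj⟩ := by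
          simp [List.getElem_append_left hj]
        rw [e] at h2
        have harr : j + N + 1 = j + 1 + N := by omega
        simpa [NorthStep, dec, Set.mem_setOf_eq, harr, List.get_eq_getElem] using h2
    · intro i hi
      match i with
      | 0 =>
        have hzM : (0:ℕ) + M ∉ Δ := by rwa [zero_add]
        refine ⟨⟨fun h' => (by cases h'), fun h' => absurd h' h0⟩,
          ⟨fun h' => (by cases h'), fun h' => absurd h'.2 hzM⟩,
          ⟨fun _ => ⟨h0, hzM⟩, fun _ => rfl⟩⟩
      | (j + 1) =>
        have hj : j < w.length := by simpa using hi
        have h2 := hw3 j (by simp; omega)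
        have e : (w ++ [Symb.bullet]).get ⟨j, by simp; omega⟩ = w.get ⟨j, hj⟩ := by
          simp [List.getElem_append_left hj]
        rw [e] at h2
        have harr : j + M + 1 = j + 1 + M := by omega
        simpa [EastStep, dec, Set.mem_setOf_eq, harr, List.get_eq_getElem] using h2

lemma area_dec (M N : ℕ) (Δ : Set ℕ) (hMN : M + N ∈ Δ) :
    area M N (dec Δ) = area M N Δ := by
  unfold area
  have h : {c : ℕ | M + N ≤ c ∧ c ∉ Δ} = (fun c => c + 1) '' {c : ℕ | M + N ≤ c ∧ c ∉ dec Δ} := by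
    ext c
    simp only [Set.mem_setOf_eq, Set.mem_image, dec]
    constructor
    · rintro ⟨h1, h2⟩
      have hc : c ≠ M + N := fun e => h2 (e ▸ hMN)
      refine ⟨c - 1, ⟨by omega, ?_⟩, by omega⟩
      rw [show c - 1 + 1 = c by omega]; exact h2
    · rintro ⟨d, ⟨h1, h2⟩, rfl⟩
      exact ⟨by omega, h2⟩
  rw [h, Set.ncard_image_of_injective _ (add_left_injective 1)]

lemma pdinv_dec (M N : ℕ) (Δ : Set ℕ) (hfin : {n : ℕ | n ∉ Δ}.Finite) (hMnot : M ∉ Δ) :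
    pdinv M N Δ = pdinv M N (dec Δ) +
      {c : ℕ | 0 < c ∧ c < M ∧ NorthStep N Δ c}.ncard := by
  classical
  set S : Set (ℕ × ℕ) :=
    {p : ℕ × ℕ | p.1 < p.2 ∧ M ≤ p.2 ∧ p.2 < p.1 + M ∧ NorthStep N Δ p.1 ∧ p.2 ∉ Δ} with hS
  set Sd : Set (ℕ × ℕ) :=
    {p : ℕ × ℕ | p.1 < p.2 ∧ M ≤ p.2 ∧ p.2 < p.1 + M ∧ NorthStep N (dec Δ) p.1 ∧ p.2 ∉ dec Δ}
    with hSd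
  set T : Set ℕ := {c : ℕ | 0 < c ∧ c < M ∧ NorthStep N Δ c} with hT
  have hSfin : S.Finite := by
    apply (hfin.prod hfin).subset
    rintro ⟨c, d⟩ ⟨-, -, -, ⟨hc, -⟩, hd⟩
    exact ⟨hc, hd⟩
  have hsplit : S = ((fun p : ℕ × ℕ => (p.1 + 1, p.2 + 1)) '' Sd) ∪ ((fun c => (c, M)) '' T) := by
    ext ⟨c, d⟩
    simp only [hS, hSd, hT, Set.mem_setOf_eq, Set.mem_union, Set.mem_image, Prod.mk.injEq,
      Prod.exists, NorthStep, dec]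
    constructor
    · rintro ⟨h1, h2, h3, ⟨h4, h5⟩, h6⟩
      rcases eq_or_lt_of_le h2 with he | hl
      · right
        exact ⟨c, ⟨by omega, by omega, h4, h5⟩, rfl, he⟩
      · left
        refine ⟨c - 1, d - 1, ⟨by omega, by omega, by omega, ⟨?_, ?_⟩, ?_⟩, by omega, by omega⟩
        · show ¬(c - 1 + 1 ∈ Δ); rw [show c - 1 + 1 = c by omega]; exact h4
        · show c - 1 + N + 1 ∈ Δ; rw [show c - 1 + N + 1 = c + N by omega]; exact h5
        · show ¬(d - 1 + 1 ∈ Δ); rw [show d - 1 + 1 = d by omega]; exact h6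
    · rintro (⟨a, b, ⟨h1, h2, h3, ⟨h4, h5⟩, h6⟩, rfl, rfl⟩ | ⟨a, ⟨ha1, ha2, ha3, ha4⟩, rfl, rfl⟩)
      · refine ⟨by omega, by omega, by omega, ⟨h4, ?_⟩, h6⟩
        rw [show a + 1 + N = a + N + 1 by omega]; exact h5
      · exact ⟨ha2, le_refl M, by omega, ⟨ha3, ha4⟩, hMnot⟩
  have hA : ((fun p : ℕ × ℕ => (p.1 + 1, p.2 + 1)) '' Sd).Finite :=
    hSfin.subset (hsplit ▸ Set.subset_union_left)
  have hB : ((fun c => (c, M)) '' T).Finite :=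
    hSfin.subset (hsplit ▸ Set.subset_union_right)
  have hdisj : Disjoint ((fun p : ℕ × ℕ => (p.1 + 1, p.2 + 1)) '' Sd) ((fun c => (c, M)) '' T) := by
    rw [Set.disjoint_left]
    rintro ⟨c, d⟩ h1 h2
    obtain ⟨⟨a, b⟩, hab, heq⟩ := h1
    obtain ⟨e, he, heq2⟩ := h2
    simp only [Prod.mk.injEq] at heq heq2
    have : M ≤ b := hab.2.1
    omega
  have hinj1 : Function.Injective (fun p : ℕ × ℕ => (p.1 + 1, p.2 + 1)) := by
    intro a b h
    simp only [Prod.mk.injEq] at h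
    exact Prod.ext (by omega) (by omega)
  have hinj2 : Function.Injective (fun c : ℕ => (c, M)) := by
    intro a b h
    simpa using congrArg Prod.fst h
  show S.ncard = Sd.ncard + T.ncard
  rw [hsplit, Set.ncard_union_eq hdisj hA hB,
    Set.ncard_image_of_injective _ hinj1, Set.ncard_image_of_injective _ hinj2]

lemma count_one_eq (M N : ℕ) (Δ : Set ℕ) (v w : List Symb)
    (hv : v.length + 1 = M)
    (hFits : Fits M N Δ (Symb.one :: v) (Symb.zero :: w)) :
    {c : ℕ | 0 < c ∧ c < M ∧ NorthStep N Δ c}.ncard = v.count Symb.one := by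
  classical
  have hset : {c : ℕ | 0 < c ∧ c < M ∧ NorthStep N Δ c} =
      (fun i => i + 1) ''
        ↑((Finset.range v.length).filter (fun i => v.getD i Symb.zero = Symb.one)) := by
    ext c
    simp only [Set.mem_setOf_eq, Set.mem_image, Finset.coe_filter, Finset.mem_range]
    constructor
    · rintro ⟨h1, h2, h3⟩
      obtain ⟨j, rfl⟩ : ∃ j, c = j + 1 := ⟨c - 1, by omega⟩
      refine ⟨j, ⟨by omega, ?_⟩, rfl⟩
      have h4 := hFits.2.2.1 (j + 1) (by simp; omega)
      have h5 := (h4.2.1).mpr h3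
      simp only [List.get_eq_getElem, List.getElem_cons_succ] at h5
      rw [List.getD_eq_getElem _ _ (show j < v.length by omega)]
      exact h5
    · rintro ⟨i, ⟨hi, hone⟩, rfl⟩
      refine ⟨by omega, by omega, ?_⟩
      have h4 := hFits.2.2.1 (i + 1) (by simp; omega)
      apply (h4.2.1).mp
      rw [List.getD_eq_getElem _ _ hi] at hone
      simpa [List.get_eq_getElem] using hone
  rw [hset, Set.ncard_image_of_injective _ (add_left_injective 1), Set.ncard_coe_finset,
    count_filter_range]

/-- For words `v`, `w` of lengths `M−1`, `N−1` and `ℓ` the number of 1's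
in `v`, decrementing is a bijection from the `M,N`-invariant sets fitting `(1v, 0w)` onto
those fitting `(v1, w•)`; moreover, for `Δ` fitting `(1v, 0w)`,
`area (dec Δ) = area Δ` and `pdinv (dec Δ) = pdinv Δ − ℓ`. -/
theorem dec_bijection_one_zero (M N : ℕ) (hM : 0 < M) (hN : 0 < N)
    (v w : List Symb) (hv : v.length + 1 = M) (hw : w.length + 1 = N) :
    Set.BijOn dec
      {Δ : Set ℕ | Invariant M N Δ ∧ Fits M N Δ (Symb.one :: v) (Symb.zero :: w)}
      {Δ : Set ℕ | Invariant M N Δ ∧ Fits M N Δ (v ++ [Symb.one]) (w ++ [Symb.bullet])} ∧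
    ∀ Δ : Set ℕ, Invariant M N Δ → Fits M N Δ (Symb.one :: v) (Symb.zero :: w) →
      area M N (dec Δ) = area M N Δ ∧
      pdinv M N (dec Δ) = pdinv M N Δ - v.count Symb.one := by
  constructor
  · refine ⟨?_, ?_, ?_⟩
    · -- MapsTo
      rintro Δ ⟨hInv, hFits⟩
      have h0 := (fits_facts hInv hFits).1
      exact ⟨invariant_dec hInv, (fits_dec_iff M N Δ v w hv hw hInv h0).mp hFits⟩
    · -- InjOn
      rintro Δ₁ ⟨hInv₁, hFits₁⟩ Δ₂ ⟨hInv₂, hFits₂⟩ heq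
      have h01 := (fits_facts hInv₁ hFits₁).1
      have h02 := (fits_facts hInv₂ hFits₂).1
      ext n
      cases n with
      | zero => exact iff_of_false h01 h02
      | succ n =>
        have : n ∈ dec Δ₁ ↔ n ∈ dec Δ₂ := by rw [heq]
        exact this
    · -- SurjOn
      rintro Δ' ⟨hInv', hFits'⟩
      set Δ : Set ℕ := {n | ∃ m ∈ Δ', m + 1 = n} with hΔdef
      have hdec : dec Δ = Δ' := by
        ext n
        simp only [dec, hΔdef, Set.mem_setOf_eq]
        constructor
        · rintro ⟨m, hm, he⟩
          have : m = n := by omega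
          rwa [this] at hm
        · intro hn; exact ⟨n, hn, rfl⟩
      have h0 : 0 ∉ Δ := by rintro ⟨m, -, hm⟩; omega
      have hInvΔ : Invariant M N Δ := by
        constructor
        · apply ((hInv'.1.image (fun n => n + 1)).insert 0).subset
          intro n hn
          cases n with
          | zero => exact Set.mem_insert 0 _
          | succ m =>
            refine Set.mem_insert_of_mem _ ⟨m, ?_, rfl⟩
            intro hm
            exact hn ⟨m, hm, rfl⟩
        · rintro i ⟨m, hm, rfl⟩
          constructor
          · exact ⟨m + M, (hInv'.2 m hm).1, by omega⟩
          · exact ⟨m + N, (hInv'.2 m hm).2, by omega⟩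
      refine ⟨Δ, ⟨hInvΔ, ?_⟩, hdec⟩
      exact (fits_dec_iff M N Δ v w hv hw hInvΔ h0).mpr (by rw [hdec]; exact hFits')
  · intro Δ hInv hFits
    obtain ⟨h0, hN', hMn, hMN⟩ := fits_facts hInv hFits
    constructor
    · exact area_dec M N Δ hMN
    · have h1 := pdinv_dec M N Δ hInv.1 hMn
      have h2 := count_one_eq M N Δ v w hv hFits
      omega
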